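/- Let X and X̄ be contracting matrices in GL(n,ℝ) and let S, S̄ be symmetric positive definite real n×n matrices. Define c := [[X, 0], [X + (Xᵀ)⁻¹S, (Xᵀ)⁻¹]] and c̄ := [[(X̄ᵀ)⁻¹, −(X̄ᵀ)⁻¹ − S̄X̄], [0, X̄]]; both lie in Sp(2n,ℝ). Then there exists g ∈ Sp(2n,ℝ) with g·c⁻¹·g⁻¹ = c̄ if and only if there exists G ∈ GL(n,ℝ) with X̄ = G·Xᵀ·G⁻¹, i.e. if and only if Xᵀ and X̄ are conjugate in GL(n,ℝ). -/

import Mathlib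

open Matrix

/-- The standard symplectic form matrix `J = [[0, 1], [-1, 0]]` in `2n × 2n` block form. -/
def Jmat (n : ℕ) : Matrix (Fin n ⊕ Fin n) (Fin n ⊕ Fin n) ℝ :=
  Matrix.fromBlocks 0 1 (-1) 0

/-- Membership in the real symplectic group `Sp(2n, ℝ)`: `gᵀ J g = J`. -/
def IsSymplectic {n : ℕ} (g : Matrix (Fin n ⊕ Fin n) (Fin n ⊕ Fin n) ℝ) : Prop :=
  gᵀ * Jmat n * g = Jmat n

/-- A real square matrix is contracting if every complex root of its characteristic
polynomial has absolute value strictly less than `1`. -/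
def Contracting {n : ℕ} (A : Matrix (Fin n) (Fin n) ℝ) : Prop :=
  ∀ μ : ℂ, (A.map (algebraMap ℝ ℂ)).charpoly.IsRoot μ → ‖μ‖ < 1

/-!
Conjugating by the unipotent symplectic matrices `[[1, 0], [M, 1]]` and `[[1, N], [0, 1]]` brings
`c` to `diag(X, X⁻ᵀ)` and `c̄` to `diag(X̄⁻ᵀ, X̄)`, where `M`, `N` are symmetric solutions of the
Stein equations `M - XᵀMX = XᵀX + S` and `N - X̄ᵀNX̄ = -(1 + X̄ᵀS̄X̄)`. These exist because
`R ↦ R - ARB` is injective when `A` and `B` are contracting: `R = AᵏRBᵏ → 0` by Gelfand's formula.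
The same injectivity shows that if `diag(X̄⁻ᵀ, X̄) H diag(X, X⁻ᵀ) = H` then `H₂₁ = X̄H₂₁X = 0`,
so for invertible `H` the block `H₂₂` is invertible and conjugates `Xᵀ` to `X̄`. Conversely,
`diag(G⁻ᵀ, G)` is symplectic and conjugates one block-diagonal form to the other.
-/

open Filter Topology

section SpectralRadius

variable {A : Type*} [NormedRing A] [NormedAlgebra ℂ A] [CompleteSpace A]

theorem tendsto_pow_atTop_nhds_zero_of_spectralRadius_lt_one {a : A}
    (ha : spectralRadius ℂ a < 1) : Tendsto (a ^ ·) atTop (𝓝 0) := by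
  obtain ⟨r, hρr, hr1⟩ := ENNReal.lt_iff_exists_nnreal_btwn.1 ha
  have hev : ∀ᶠ k : ℕ in atTop, ‖a ^ k‖₊ ≤ r ^ k := by
    filter_upwards
      [(spectrum.pow_nnnorm_pow_one_div_tendsto_nhds_spectralRadius a).eventually_lt_const hρr,
        eventually_gt_atTop 0] with k hk hk0
    rw [← ENNReal.coe_rpow_of_nonneg _ (by positivity), ENNReal.coe_lt_coe, one_div,
      NNReal.rpow_inv_lt_iff (by positivity), NNReal.rpow_natCast] at hk
    exact hk.le
  exact squeeze_zero_norm' (hev.mono fun k hk => by exact_mod_cast hk)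
    (tendsto_pow_atTop_nhds_zero_of_lt_one r.2 (by exact_mod_cast hr1))

theorem eq_zero_of_eq_mul_mul_of_spectralRadius_lt_one {a b x : A}
    (ha : spectralRadius ℂ a < 1) (hb : spectralRadius ℂ b < 1) (h : x = a * x * b) : x = 0 := by
  have hpow : ∀ k : ℕ, a ^ k * x * b ^ k = x := by
    intro k
    induction k with
    | zero => simp
    | succ k ih =>
      calc a ^ (k + 1) * x * b ^ (k + 1) = a ^ k * (a * x * b) * b ^ k := by
            rw [pow_succ a, pow_succ' b]; simp only [mul_assoc]
        _ = x := by rw [← h, ih]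
  simpa [hpow] using ((tendsto_pow_atTop_nhds_zero_of_spectralRadius_lt_one ha).mul_const x).mul
    (tendsto_pow_atTop_nhds_zero_of_spectralRadius_lt_one hb)

end SpectralRadius

namespace Contracting

variable {n : ℕ} {A B : Matrix (Fin n) (Fin n) ℝ}

-- Any Banach algebra norm will do: the spectral radius does not depend on it.
attribute [local instance] Matrix.linftyOpNormedRing Matrix.linftyOpNormedAlgebra

theorem spectralRadius_lt_one (hA : Contracting A) :
    spectralRadius ℂ (A.map (algebraMap ℝ ℂ)) < 1 := by
  rcases (spectrum ℂ (A.map (algebraMap ℝ ℂ))).eq_empty_or_nonempty with h | h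
  · rw [spectralRadius, h]; simp
  · exact_mod_cast spectrum.spectralRadius_lt_of_forall_lt_of_nonempty h fun μ hμ =>
      by exact_mod_cast hA μ (mem_spectrum_iff_isRoot_charpoly.1 hμ)

theorem transpose (hA : Contracting A) : Contracting Aᵀ := by
  intro μ hμ
  rw [transpose_map, charpoly_transpose] at hμ
  exact hA μ hμ

theorem eq_zero_of_eq_mul_mul (hA : Contracting A) (hB : Contracting B)
    {R : Matrix (Fin n) (Fin n) ℝ} (h : R = A * R * B) : R = 0 := by
  have hℂ : R.map (algebraMap ℝ ℂ) = 0 :=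
    eq_zero_of_eq_mul_mul_of_spectralRadius_lt_one hA.spectralRadius_lt_one
      hB.spectralRadius_lt_one
      (by simpa only [Matrix.map_mul] using congrArg (Matrix.map · (algebraMap ℝ ℂ)) h)
  exact Matrix.map_injective (algebraMap ℝ ℂ).injective (by simpa using hℂ)

theorem exists_sub_mul_mul_eq (hA : Contracting A) (hB : Contracting B)
    (C : Matrix (Fin n) (Fin n) ℝ) : ∃ R, R - A * R * B = C := by
  let φ : Matrix (Fin n) (Fin n) ℝ →ₗ[ℝ] Matrix (Fin n) (Fin n) ℝ :=
    LinearMap.id - (LinearMap.mulLeft ℝ A).comp (LinearMap.mulRight ℝ B)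
  have hφ : Function.Injective φ := by
    refine (injective_iff_map_eq_zero φ).2 fun R hR => hA.eq_zero_of_eq_mul_mul hB ?_
    simpa [φ, sub_eq_zero, Matrix.mul_assoc] using hR
  obtain ⟨R, hR⟩ := LinearMap.injective_iff_surjective.1 hφ C
  exact ⟨R, by simpa [φ, Matrix.mul_assoc] using hR⟩

theorem exists_isSymm_sub_transpose_mul_mul_eq (hA : Contracting A)
    {C : Matrix (Fin n) (Fin n) ℝ} (hC : C.IsSymm) : ∃ R, R.IsSymm ∧ R - Aᵀ * R * A = C := by
  obtain ⟨R, hR⟩ := hA.transpose.exists_sub_mul_mul_eq hA C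
  refine ⟨R, ?_, hR⟩
  have hRT : Rᵀ - Aᵀ * Rᵀ * A = C := by
    simpa [transpose_sub, transpose_mul, hC.eq, Matrix.mul_assoc] using
      congrArg Matrix.transpose hR
  have hskew : R - Rᵀ = Aᵀ * (R - Rᵀ) * A := by
    rw [Matrix.mul_sub, Matrix.sub_mul]
    exact sub_eq_sub_iff_sub_eq_sub.1 (hR.trans hRT.symm)
  exact (sub_eq_zero.1 (hA.transpose.eq_zero_of_eq_mul_mul hA hskew)).symm

theorem isUnit_toBlocks₂₂_of_fromBlocks_mul_mul_eq
    {P P' Q Q' : Matrix (Fin n) (Fin n) ℝ} {H : Matrix (Fin n ⊕ Fin n) (Fin n ⊕ Fin n) ℝ}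
    (hQ' : Contracting Q') (hP : Contracting P) (hH : IsUnit H.det)
    (h : fromBlocks Q 0 0 Q' * H * fromBlocks P 0 0 P' = H) :
    IsUnit H.toBlocks₂₂ ∧ Q' * H.toBlocks₂₂ * P' = H.toBlocks₂₂ := by
  rw [← fromBlocks_toBlocks H] at h hH
  simp only [fromBlocks_multiply, Matrix.mul_zero, Matrix.zero_mul, add_zero, zero_add,
    fromBlocks_inj] at h
  have h₂₁ : H.toBlocks₂₁ = 0 := hQ'.eq_zero_of_eq_mul_mul hP h.2.2.1.symm
  rw [h₂₁, det_fromBlocks_zero₂₁, IsUnit.mul_iff] at hH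
  exact ⟨(isUnit_iff_isUnit_det _).2 hH.2, h.2.2.2⟩

end Contracting

section Conj

variable {G : Type*} [Group G] {a b : G}

theorem IsConj.inv (h : IsConj a b) : IsConj a⁻¹ b⁻¹ := by
  obtain ⟨c, rfl⟩ := isConj_iff.1 h
  exact isConj_iff.2 ⟨c, conj_inv.symm⟩

theorem isConj_inv_iff_exists_mul_mul_eq : IsConj a⁻¹ b ↔ ∃ g, b * g * a = g := by
  rw [isConj_iff]
  refine exists_congr fun g => ⟨fun h => by rw [← h]; group, fun h => ?_⟩
  nth_rw 1 [← h]; group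

end Conj

section BlockMatrix

variable {m R : Type*} [Fintype m] [DecidableEq m]

theorem semiconjBy_fromBlocks_lower [Ring R] (A B M : Matrix m m R) :
    SemiconjBy (fromBlocks 1 0 M 1) (fromBlocks A 0 (B * M - M * A) B) (fromBlocks A 0 0 B) := by
  simp [SemiconjBy, fromBlocks_multiply]

theorem semiconjBy_fromBlocks_upper [Ring R] (A B N : Matrix m m R) :
    SemiconjBy (fromBlocks 1 N 0 1) (fromBlocks A (A * N - N * B) 0 B) (fromBlocks A 0 0 B) := by
  simp [SemiconjBy, fromBlocks_multiply]

theorem nonsing_inv_mul_sub_mul_eq [CommRing R] {A B C X : Matrix m m R} (hA : IsUnit A.det)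
    (h : X - A * X * B = C) : A⁻¹ * X - X * B = A⁻¹ * C := by
  rw [← h, Matrix.mul_sub, ← Matrix.mul_assoc, ← Matrix.mul_assoc, nonsing_inv_mul _ hA,
    Matrix.one_mul]

theorem mul_mul_nonsing_inv_eq_self_iff [CommRing R] {A B G : Matrix m m R} (hA : IsUnit A)
    (hG : IsUnit G) : B * G * A⁻¹ = G ↔ B = G * A * G⁻¹ := by
  have := hA.invertible
  have := hG.invertible
  rw [mul_inv_eq_iff_eq_mul_of_invertible, eq_comm (a := B), mul_inv_eq_iff_eq_mul_of_invertible,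
    eq_comm]

end BlockMatrix

namespace SymplecticGroup

variable {m R : Type*} [Fintype m] [DecidableEq m] [CommRing R]

theorem fromBlocks_lower_mem {M : Matrix m m R} (hM : M.IsSymm) :
    fromBlocks 1 0 M 1 ∈ symplecticGroup m R :=
  fromBlocks_mem_iff.2 ⟨by simp [hM.eq], by simp, by simp⟩

theorem fromBlocks_upper_mem {N : Matrix m m R} (hN : N.IsSymm) :
    fromBlocks 1 N 0 1 ∈ symplecticGroup m R :=
  fromBlocks_mem_iff.2 ⟨by simp, by simp [hN.eq], by simp⟩

theorem fromBlocks_diag_mem {A D : Matrix m m R} (h : Aᵀ * D = 1) :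
    fromBlocks A 0 0 D ∈ symplecticGroup m R :=
  fromBlocks_mem_iff.2 ⟨by simp, by simp, by simpa using h⟩

theorem exists_isConj_of_semiconjBy {u a b : Matrix (m ⊕ m) (m ⊕ m) R}
    (hu : u ∈ symplecticGroup m R) (hb : b ∈ symplecticGroup m R) (h : SemiconjBy u a b) :
    ∃ ha : a ∈ symplecticGroup m R,
      IsConj (⟨a, ha⟩ : symplecticGroup m R) ⟨b, hb⟩ := by
  have ha : a = (⟨u, hu⟩⁻¹ : symplecticGroup m R) * b * u := by
    rw [coe_inv', Matrix.mul_assoc, ← h.eq, nonsing_inv_mul_cancel_left _ _ (symplectic_det hu)]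
  exact ⟨ha ▸ mul_mem (mul_mem (SetLike.coe_mem _) hb) hu, toUnits ⟨u, hu⟩, Subtype.ext h⟩

end SymplecticGroup

section SymplecticConjugacy

variable {n : ℕ}

theorem isSymplectic_iff_mem_symplecticGroup {g : Matrix (Fin n ⊕ Fin n) (Fin n ⊕ Fin n) ℝ} :
    IsSymplectic g ↔ g ∈ symplecticGroup (Fin n) ℝ := by
  have hJ : Jmat n = -J (Fin n) ℝ := by simp [Jmat, J, fromBlocks_neg]
  rw [SymplecticGroup.mem_iff', IsSymplectic, hJ, Matrix.mul_neg, Matrix.neg_mul, neg_inj]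

theorem exists_isSymplectic_conj_inv_iff_isConj (a b : symplecticGroup (Fin n) ℝ) :
    (∃ g, IsSymplectic g ∧
        g * (a : Matrix (Fin n ⊕ Fin n) (Fin n ⊕ Fin n) ℝ)⁻¹ * g⁻¹ = (b : Matrix _ _ ℝ)) ↔
      IsConj a⁻¹ b := by
  simp only [isConj_iff, isSymplectic_iff_mem_symplecticGroup, Subtype.ext_iff,
    Submonoid.coe_mul, SymplecticGroup.coe_inv', Subtype.exists, exists_prop]

theorem isConj_inv_fromBlocks_iff {P P' Q Q' : Matrix (Fin n) (Fin n) ℝ}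
    (hPP' : Pᵀ * P' = 1) (hQQ' : Qᵀ * Q' = 1) (hP : Contracting P) (hQ' : Contracting Q') :
    IsConj (⟨fromBlocks P 0 0 P', SymplecticGroup.fromBlocks_diag_mem hPP'⟩ :
        symplecticGroup (Fin n) ℝ)⁻¹
      ⟨fromBlocks Q 0 0 Q', SymplecticGroup.fromBlocks_diag_mem hQQ'⟩ ↔
      ∃ G, IsUnit G ∧ Q' * G * P' = G := by
  rw [isConj_inv_iff_exists_mul_mul_eq]
  constructor
  · rintro ⟨g, hg⟩
    exact ⟨_, hQ'.isUnit_toBlocks₂₂_of_fromBlocks_mul_mul_eq hP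
      (SymplecticGroup.symplectic_det g.2) (congrArg Subtype.val hg)⟩
  · rintro ⟨G, hG, hGP⟩
    have hGdet := (isUnit_iff_isUnit_det G).1 hG
    have hGinv : (Gᵀ⁻¹)ᵀ = G⁻¹ := by rw [← transpose_nonsing_inv, transpose_transpose]
    have hinv : Pᵀ * G⁻¹ * Qᵀ * G = 1 :=
      calc Pᵀ * G⁻¹ * Qᵀ * G = Pᵀ * G⁻¹ * Qᵀ * (Q' * G * P') := by rw [hGP]
        _ = Pᵀ * (G⁻¹ * (Qᵀ * Q' * G)) * P' := by simp only [Matrix.mul_assoc]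
        _ = 1 := by rw [hQQ', Matrix.one_mul, nonsing_inv_mul G hGdet, Matrix.mul_one, hPP']
    have h₁₁ : Q * Gᵀ⁻¹ * P = Gᵀ⁻¹ := transpose_injective <| by
      rw [transpose_mul, transpose_mul, hGinv, ← Matrix.mul_assoc]
      exact (inv_eq_left_inv hinv).symm
    refine ⟨⟨fromBlocks Gᵀ⁻¹ 0 0 G, SymplecticGroup.fromBlocks_diag_mem ?_⟩, Subtype.ext ?_⟩
    · rw [hGinv, nonsing_inv_mul G hGdet]
    · simp [fromBlocks_multiply, h₁₁, hGP]

theorem exists_isSymm_semiconjBy_fromBlocks_lower {X S : Matrix (Fin n) (Fin n) ℝ}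
    (hX : IsUnit X) (hXc : Contracting X) (hS : S.IsSymm) :
    ∃ M, M.IsSymm ∧ SemiconjBy (fromBlocks 1 0 M 1) (fromBlocks X 0 (X + Xᵀ⁻¹ * S) Xᵀ⁻¹)
      (fromBlocks X 0 0 Xᵀ⁻¹) := by
  have hXt : IsUnit Xᵀ.det := by simpa using (isUnit_iff_isUnit_det X).1 hX
  obtain ⟨M, hMs, hM⟩ :=
    hXc.exists_isSymm_sub_transpose_mul_mul_eq ((isSymm_transpose_mul_self X).add hS)
  refine ⟨M, hMs, ?_⟩
  convert semiconjBy_fromBlocks_lower X Xᵀ⁻¹ M using 2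
  rw [nonsing_inv_mul_sub_mul_eq hXt hM, Matrix.mul_add, ← Matrix.mul_assoc,
    nonsing_inv_mul _ hXt, Matrix.one_mul]

theorem exists_isSymm_semiconjBy_fromBlocks_upper {X S : Matrix (Fin n) (Fin n) ℝ}
    (hX : IsUnit X) (hXc : Contracting X) (hS : S.IsSymm) :
    ∃ N, N.IsSymm ∧ SemiconjBy (fromBlocks 1 N 0 1) (fromBlocks Xᵀ⁻¹ (-Xᵀ⁻¹ - S * X) 0 X)
      (fromBlocks Xᵀ⁻¹ 0 0 X) := by
  have hXt : IsUnit Xᵀ.det := by simpa using (isUnit_iff_isUnit_det X).1 hX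
  have hXSX : (Xᵀ * S * X).IsSymm := by
    simp [IsSymm, transpose_mul, hS.eq, Matrix.mul_assoc]
  obtain ⟨N, hNs, hN⟩ := hXc.exists_isSymm_sub_transpose_mul_mul_eq (isSymm_one.add hXSX).neg
  refine ⟨N, hNs, ?_⟩
  convert semiconjBy_fromBlocks_upper Xᵀ⁻¹ X N using 2
  rw [nonsing_inv_mul_sub_mul_eq hXt hN, Matrix.mul_neg, Matrix.mul_add, Matrix.mul_one,
    ← Matrix.mul_assoc, ← Matrix.mul_assoc, nonsing_inv_mul _ hXt, Matrix.one_mul, neg_add']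

end SymplecticConjugacy

theorem stmt12 (n : ℕ) (X Xb S Sb : Matrix (Fin n) (Fin n) ℝ)
    (hX : IsUnit X) (hXb : IsUnit Xb)
    (hXc : Contracting X) (hXbc : Contracting Xb)
    (hS : S.PosDef) (hSb : Sb.PosDef) :
    let c := Matrix.fromBlocks X 0 (X + Xᵀ⁻¹ * S) Xᵀ⁻¹
    let cb := Matrix.fromBlocks Xbᵀ⁻¹ (-Xbᵀ⁻¹ - Sb * Xb) 0 Xb
    IsSymplectic c ∧ IsSymplectic cb ∧
      ((∃ g : Matrix (Fin n ⊕ Fin n) (Fin n ⊕ Fin n) ℝ,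
          IsSymplectic g ∧ g * c⁻¹ * g⁻¹ = cb) ↔
        (∃ G : Matrix (Fin n) (Fin n) ℝ, IsUnit G ∧ Xb = G * Xᵀ * G⁻¹)) := by
  intro c cb
  have hδ : Xᵀ * Xᵀ⁻¹ = 1 := mul_nonsing_inv _ (by simpa using (isUnit_iff_isUnit_det X).1 hX)
  have hδb : Xbᵀ⁻¹ᵀ * Xb = 1 := by
    rw [← transpose_nonsing_inv, transpose_transpose,
      nonsing_inv_mul _ ((isUnit_iff_isUnit_det Xb).1 hXb)]
  obtain ⟨M, hMs, hU⟩ :=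
    exists_isSymm_semiconjBy_fromBlocks_lower hX hXc (isHermitian_iff_isSymm.1 hS.1)
  obtain ⟨N, hNs, hV⟩ :=
    exists_isSymm_semiconjBy_fromBlocks_upper hXb hXbc (isHermitian_iff_isSymm.1 hSb.1)
  obtain ⟨hc, hcδ⟩ := SymplecticGroup.exists_isConj_of_semiconjBy
    (SymplecticGroup.fromBlocks_lower_mem hMs) (SymplecticGroup.fromBlocks_diag_mem hδ) hU
  obtain ⟨hcb, hcbδ⟩ := SymplecticGroup.exists_isConj_of_semiconjBy
    (SymplecticGroup.fromBlocks_upper_mem hNs) (SymplecticGroup.fromBlocks_diag_mem hδb) hV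
  refine ⟨isSymplectic_iff_mem_symplecticGroup.2 hc, isSymplectic_iff_mem_symplecticGroup.2 hcb,
    (exists_isSymplectic_conj_inv_iff_isConj ⟨c, hc⟩ ⟨cb, hcb⟩).trans ?_⟩
  rw [isConj_iff_conjugatesOf_eq, hcδ.inv.conjugatesOf_eq, hcbδ.conjugatesOf_eq,
    ← isConj_iff_conjugatesOf_eq, isConj_inv_fromBlocks_iff hδ hδb hXc hXbc]
  exact exists_congr fun G => and_congr_right fun hG =>
    mul_mul_nonsing_inv_eq_self_iff ((isUnit_transpose X).2 hX) hG
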